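/- If γ is a proper 3-coloring of the disjointness graph D(C₅) of 5 points in convex position, then at most 2 of the 5 points are apices of star color classes of γ. -/

import Mathlib

open scoped Classical

/-- The closed segment associated to an unordered pair of points. -/
noncomputable def seg : Sym2 (ℝ × ℝ) → Set (ℝ × ℝ) :=
  Sym2.lift ⟨fun p q => segment ℝ p q, fun p q => segment_symm ℝ p q⟩

lemma seg_nonempty (s : Sym2 (ℝ × ℝ)) : (seg s).Nonempty := by
  induction s using Sym2.ind with
  | _ p q => exact ⟨p, by simp [seg, left_mem_segment]⟩

/-- A point set is in general position if no three (distinct) of its points are collinear. -/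
def GenPos (P : Set (ℝ × ℝ)) : Prop :=
  ∀ a ∈ P, ∀ b ∈ P, ∀ c ∈ P, a ≠ b → a ≠ c → b ≠ c →
    ¬ Collinear ℝ ({a, b, c} : Set (ℝ × ℝ))

/-- A point set is in convex position if every point is a vertex of the convex hull. -/
def ConvexPos (P : Set (ℝ × ℝ)) : Prop :=
  ∀ p ∈ P, p ∉ convexHull ℝ (P \ {p})

/-- Vertices of the disjointness graph: unordered pairs of distinct points of `P`. -/
def SegOn (P : Set (ℝ × ℝ)) : Type :=
  {s : Sym2 (ℝ × ℝ) // (∀ p ∈ s, p ∈ P) ∧ ¬ s.IsDiag}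

/-- The disjointness graph of segments of `P`: segments adjacent iff disjoint. -/
noncomputable def DisjGraph (P : Set (ℝ × ℝ)) : SimpleGraph (SegOn P) where
  Adj a b := seg a.1 ∩ seg b.1 = ∅
  symm := by
    constructor
    intro a b (h : seg a.1 ∩ seg b.1 = ∅)
    show seg b.1 ∩ seg a.1 = ∅
    rwa [Set.inter_comm]
  loopless := by
    constructor
    intro a (h : seg a.1 ∩ seg a.1 = ∅)
    rw [Set.inter_self] at h
    exact (seg_nonempty a.1).ne_empty h

/-- Two (unordered pairs of points seen as) segments cross if they intersect
but share no endpoint. -/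
def Crosses (s t : Sym2 (ℝ × ℝ)) : Prop :=
  (seg s ∩ seg t).Nonempty ∧ ∀ p, p ∈ s → p ∉ t

/-- A colour class is a star if no two of its segments cross. -/
def IsStarClass {P : Set (ℝ × ℝ)} {α : Type} (γ : (DisjGraph P).Coloring α) (c : α) : Prop :=
  ∀ s t : SegOn P, γ s = c → γ t = c → ¬ Crosses s.1 t.1

/-- `v` is an apex of the colour class `c`: every segment of the class is incident with `v`. -/
def IsApex {P : Set (ℝ × ℝ)} {α : Type} (γ : (DisjGraph P).Coloring α) (c : α) (v : ℝ × ℝ) : Prop :=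
  ∀ s : SegOn P, γ s = c → v ∈ s.1




lemma coll3 (x y z : ℝ × ℝ) (α β : ℝ) (hs : α + β = 1) (h : x = α • y + β • z) :
    Collinear ℝ ({x, y, z} : Set (ℝ × ℝ)) := by
  rw [collinear_iff_of_mem (show y ∈ ({x,y,z} : Set (ℝ×ℝ)) by simp)]
  refine ⟨z - y, ?_⟩
  intro p hp
  rcases hp with rfl | rfl | rfl
  · refine ⟨β, ?_⟩
    rw [h]
    have hα : α = 1 - β := by linarith
    rw [hα]
    simp [Prod.ext_iff]
    constructor <;> ring
  · exact ⟨0, by simp⟩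
  · exact ⟨1, by simp⟩

lemma dep3 (b c d : ℝ × ℝ) (h : ¬ Collinear ℝ ({b, c, d} : Set (ℝ × ℝ)))
    (β γ δ : ℝ) (hsum : β + γ + δ = 0) (hdep : β • b + γ • c + δ • d = 0) :
    β = 0 ∧ γ = 0 ∧ δ = 0 := by
  have h1 : β * b.1 + γ * c.1 + δ * d.1 = 0 := congrArg Prod.fst hdep
  have h2 : β * b.2 + γ * c.2 + δ * d.2 = 0 := congrArg Prod.snd hdep
  have hβ : β = 0 := by
    by_contra hβ
    apply h
    apply coll3 b c d (-γ/β) (-δ/β) (by field_simp; linear_combination (-1 : ℝ) * hsum)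
    simp only [Prod.ext_iff, Prod.smul_fst, Prod.smul_snd, Prod.fst_add, Prod.snd_add,
      smul_eq_mul]
    constructor
    · field_simp
      linear_combination h1
    · field_simp
      linear_combination h2
  have hcd : c ≠ d := by
    rintro rfl
    exact h (by
      have : ({b, c, c} : Set (ℝ×ℝ)) = {b, c} := by simp
      rw [this]; exact collinear_pair ℝ b c)
  have hγ : γ = 0 := by
    by_contra hγ
    apply hcd
    have hδ : δ = -γ := by linarith
    subst hδ hβ
    have e1 : γ * (c.1 - d.1) = 0 := by linear_combination h1
    have e2 : γ * (c.2 - d.2) = 0 := by linear_combination h2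
    have k1 : c.1 = d.1 := by
      rcases mul_eq_zero.1 e1 with h' | h'
      · exact absurd h' hγ
      · linarith
    have k2 : c.2 = d.2 := by
      rcases mul_eq_zero.1 e2 with h' | h'
      · exact absurd h' hγ
      · linarith
    exact Prod.ext k1 k2
  exact ⟨hβ, hγ, by linarith⟩


/-- strict coefficients for a point in the intersection of two segments on 4 points
in general position -/
lemma seg_inter_coeffs (a c b d x : ℝ × ℝ)
    (h1 : x ∈ segment ℝ a c) (h2 : x ∈ segment ℝ b d)
    (hcbd : ¬ Collinear ℝ ({c, b, d} : Set (ℝ × ℝ)))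
    (habd : ¬ Collinear ℝ ({a, b, d} : Set (ℝ × ℝ)))
    (hdac : ¬ Collinear ℝ ({d, a, c} : Set (ℝ × ℝ)))
    (hbac : ¬ Collinear ℝ ({b, a, c} : Set (ℝ × ℝ))) :
    ∃ s₁ s₂ t₁ t₂ : ℝ, 0 < s₁ ∧ 0 < s₂ ∧ 0 < t₁ ∧ 0 < t₂ ∧
      s₁ + s₂ = 1 ∧ t₁ + t₂ = 1 ∧ s₁ • a + s₂ • c = t₁ • b + t₂ • d := by
  obtain ⟨s₁, s₂, hs₁, hs₂, hs, hx⟩ := h1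
  obtain ⟨t₁, t₂, ht₁, ht₂, ht, hy⟩ := h2
  have heq : s₁ • a + s₂ • c = t₁ • b + t₂ • d := by rw [hx, hy]
  refine ⟨s₁, s₂, t₁, t₂, ?_, ?_, ?_, ?_, hs, ht, heq⟩
  · rcases lt_or_eq_of_le hs₁ with h' | h'
    · exact h'
    exfalso
    apply hcbd
    apply coll3 c b d t₁ t₂ ht
    have hs₂1 : s₂ = 1 := by linarith
    have : s₂ • c = t₁ • b + t₂ • d := by rw [← heq, ← h', hs₂1]; simp
    rw [hs₂1, one_smul] at this; exact this
  · rcases lt_or_eq_of_le hs₂ with h' | h'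
    · exact h'
    exfalso
    apply habd
    apply coll3 a b d t₁ t₂ ht
    have hs₁1 : s₁ = 1 := by linarith
    have : s₁ • a = t₁ • b + t₂ • d := by rw [← heq, ← h', hs₁1]; simp
    rw [hs₁1, one_smul] at this; exact this
  · rcases lt_or_eq_of_le ht₁ with h' | h'
    · exact h'
    exfalso
    apply hdac
    apply coll3 d a c s₁ s₂ hs
    have ht₂1 : t₂ = 1 := by linarith
    have : t₂ • d = s₁ • a + s₂ • c := by rw [heq, ← h', ht₂1]; simp
    rw [ht₂1, one_smul] at this; exact this
  · rcases lt_or_eq_of_le ht₂ with h' | h'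
    · exact h'
    exfalso
    apply hbac
    apply coll3 b a c s₁ s₂ hs
    have ht₁1 : t₁ = 1 := by linarith
    have : t₁ • b = s₁ • a + s₂ • c := by rw [heq, ← h', ht₁1]; simp
    rw [ht₁1, one_smul] at this; exact this

/-- among the two matchings (ac,bd) and (ad,bc), one consists of disjoint segments -/
lemma matching_lemma (a b c d : ℝ × ℝ)
    (hbcd : ¬ Collinear ℝ ({b, c, d} : Set (ℝ × ℝ)))
    (habd : ¬ Collinear ℝ ({a, b, d} : Set (ℝ × ℝ)))
    (hacd : ¬ Collinear ℝ ({a, c, d} : Set (ℝ × ℝ)))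
    (habc : ¬ Collinear ℝ ({a, b, c} : Set (ℝ × ℝ))) :
    segment ℝ a c ∩ segment ℝ b d = ∅ ∨ segment ℝ a d ∩ segment ℝ b c = ∅ := by
  by_contra hcon
  push_neg at hcon
  obtain ⟨he1, he2⟩ := hcon
  obtain ⟨x, hx1, hx2⟩ := he1
  obtain ⟨y, hy1, hy2⟩ := he2
  have perm : ∀ (u v w : ℝ × ℝ), ¬ Collinear ℝ ({u,v,w} : Set (ℝ×ℝ)) →
      ∀ (u' v' w' : ℝ × ℝ), ({u',v',w'} : Set (ℝ×ℝ)) = {u,v,w} →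
      ¬ Collinear ℝ ({u',v',w'} : Set (ℝ×ℝ)) := by
    intro u v w h u' v' w' he
    rw [he]; exact h
  obtain ⟨s₁, s₂, t₁, t₂, hs₁, hs₂, ht₁, ht₂, hs, ht, heq⟩ :=
    seg_inter_coeffs a c b d x hx1 hx2
      (perm _ _ _ hbcd _ _ _ (by ext z; simp; tauto))
      habd
      (perm _ _ _ hacd _ _ _ (by ext z; simp; tauto))
      (perm _ _ _ habc _ _ _ (by ext z; simp; tauto))
  obtain ⟨σ₁, σ₂, τ₁, τ₂, hσ₁, hσ₂, hτ₁, hτ₂, hσ, hτ, heq'⟩ :=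
    seg_inter_coeffs a d b c y hy1 hy2
      (perm _ _ _ hbcd _ _ _ (by ext z; simp; tauto))
      habc
      (perm _ _ _ hacd _ _ _ (by ext z; simp; tauto))
      (perm _ _ _ habd _ _ _ (by ext z; simp; tauto))
  -- combine: σ₁ • heq - s₁ • heq'
  have key : (s₁*τ₁ - σ₁*t₁) • b + (σ₁*s₂ + s₁*τ₂) • c + (-(s₁*σ₂) - σ₁*t₂) • d = 0 := by
    have e1 := congrArg (fun z => σ₁ • z) heq
    have e2 := congrArg (fun z => s₁ • z) heq'
    have : σ₁ • (s₁ • a + s₂ • c) - s₁ • (σ₁ • a + σ₂ • d)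
         = σ₁ • (t₁ • b + t₂ • d) - s₁ • (τ₁ • b + τ₂ • c) := by rw [e1, e2]
    ext
    · have := congrArg Prod.fst this
      simp [Prod.ext_iff] at this ⊢
      ring_nf at this ⊢
      linarith
    · have := congrArg Prod.snd this
      simp [Prod.ext_iff] at this ⊢
      ring_nf at this ⊢
      linarith
  have hsum : (s₁*τ₁ - σ₁*t₁) + (σ₁*s₂ + s₁*τ₂) + (-(s₁*σ₂) - σ₁*t₂) = 0 := by nlinarith
  obtain ⟨-, hmid, -⟩ := dep3 b c d hbcd _ _ _ hsum key
  nlinarith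

def mkSeg (P : Set (ℝ × ℝ)) (p q : ℝ × ℝ) (hp : p ∈ P) (hq : q ∈ P) (hpq : p ≠ q) :
    SegOn P :=
  ⟨s(p, q), by
    constructor
    · intro z hz
      rw [Sym2.mem_iff] at hz
      rcases hz with rfl | rfl <;> assumption
    · rw [Sym2.mk_isDiag_iff]
      exact hpq⟩

lemma seg_mkSeg (P : Set (ℝ × ℝ)) (p q : ℝ × ℝ) (hp hq hpq) :
    seg (mkSeg P p q hp hq hpq).1 = segment ℝ p q := rfl

lemma mem_mkSeg (P : Set (ℝ × ℝ)) (p q v : ℝ × ℝ) (hp hq hpq) :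
    v ∈ (mkSeg P p q hp hq hpq).1 ↔ v = p ∨ v = q := Sym2.mem_iff

lemma fin3_eq_of (c cp cq cr : Fin 3) (h1 : cp ≠ cq) (h2 : cp ≠ cr) (h3 : cq ≠ cr) :
    c = cp ∨ c = cq ∨ c = cr := by revert c cp cq cr; decide

lemma fin3_eq_of2 (x y c c' : Fin 3) (h : c ≠ c') (h1 : x ≠ c) (h2 : x ≠ c')
    (h3 : y ≠ c) (h4 : y ≠ c') : x = y := by revert x y c c'; decide

lemma key2 (P : Finset (ℝ × ℝ)) (hgp : GenPos ↑P)
    (γ : (DisjGraph ↑P).Coloring (Fin 3)) (p q r u w : ℝ × ℝ)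
    (hp : p ∈ P) (hq : q ∈ P) (hu : u ∈ P) (hw : w ∈ P)
    (hpq : p ≠ q) (hpr : p ≠ r) (hpu : p ≠ u) (hpw : p ≠ w)
    (hqr : q ≠ r) (hqu : q ≠ u) (hqw : q ≠ w)
    (hru : r ≠ u) (hrw : r ≠ w) (huw : u ≠ w)
    (c c' : Fin 3) (hne : ∃ s, γ s = c)
    (hap : IsApex γ c p) (haq : IsApex γ c q) (har : IsApex γ c' r) : False := by
  have hp' : p ∈ (↑P : Set (ℝ × ℝ)) := hp
  have hq' : q ∈ (↑P : Set (ℝ × ℝ)) := hq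
  have hu' : u ∈ (↑P : Set (ℝ × ℝ)) := hu
  have hw' : w ∈ (↑P : Set (ℝ × ℝ)) := hw
  -- c ≠ c'
  have hcc' : c ≠ c' := by
    rintro rfl
    obtain ⟨s0, hs0⟩ := hne
    have hps : p ∈ s0.1 := hap s0 hs0
    have hqs : q ∈ s0.1 := haq s0 hs0
    have hrs : r ∈ s0.1 := har s0 hs0
    have hs0eq : s0.1 = s(p, q) := (Sym2.mem_and_mem_iff hpq).1 ⟨hps, hqs⟩
    rw [hs0eq, Sym2.mem_iff] at hrs
    rcases hrs with h' | h'
    · exact hpr h'.symm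
    · exact hqr h'.symm
  set spu := mkSeg ↑P p u hp' hu' hpu with hspu
  set sqw := mkSeg ↑P q w hq' hw' hqw with hsqw
  set spw := mkSeg ↑P p w hp' hw' hpw with hspw
  set squ := mkSeg ↑P q u hq' hu' hqu with hsqu
  have color_ne : ∀ (s : SegOn ↑P) (x y : ℝ × ℝ), s.1 = s(x, y) →
      q ≠ x → q ≠ y → r ≠ x → r ≠ y → γ s ≠ c ∧ γ s ≠ c' := by
    intro s x y hsxy hqx hqy hrx hry
    constructor
    · intro h
      have := haq s h
      rw [hsxy, Sym2.mem_iff] at this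
      tauto
    · intro h
      have := har s h
      rw [hsxy, Sym2.mem_iff] at this
      tauto
  have cpu := color_ne spu p u rfl hpq.symm hqu hpr.symm hru
  have cpw := color_ne spw p w rfl hpq.symm hqw hpr.symm hrw
  have color_ne' : ∀ (s : SegOn ↑P) (x y : ℝ × ℝ), s.1 = s(x, y) →
      p ≠ x → p ≠ y → r ≠ x → r ≠ y → γ s ≠ c ∧ γ s ≠ c' := by
    intro s x y hsxy hpx hpy hrx hry
    constructor
    · intro h
      have := hap s h
      rw [hsxy, Sym2.mem_iff] at this
      tauto
    · intro h
      have := har s h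
      rw [hsxy, Sym2.mem_iff] at this
      tauto
  have cqw := color_ne' sqw q w rfl hpq hpw hqr.symm hrw
  have cqu := color_ne' squ q u rfl hpq hpu hqr.symm hru
  have heq1 : γ spu = γ sqw := fin3_eq_of2 _ _ c c' hcc' cpu.1 cpu.2 cqw.1 cqw.2
  have heq2 : γ spw = γ squ := fin3_eq_of2 _ _ c c' hcc' cpw.1 cpw.2 cqu.1 cqu.2
  -- geometry
  have hgp1 : ¬ Collinear ℝ ({q, u, w} : Set (ℝ × ℝ)) := hgp q hq' u hu' w hw' hqu hqw huw
  have hgp2 : ¬ Collinear ℝ ({p, q, w} : Set (ℝ × ℝ)) := hgp p hp' q hq' w hw' hpq hpw hqw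
  have hgp3 : ¬ Collinear ℝ ({p, u, w} : Set (ℝ × ℝ)) := hgp p hp' u hu' w hw' hpu hpw huw
  have hgp4 : ¬ Collinear ℝ ({p, q, u} : Set (ℝ × ℝ)) := hgp p hp' q hq' u hu' hpq hpu hqu
  rcases matching_lemma p q u w hgp1 hgp2 hgp3 hgp4 with hdisj | hdisj
  · exact (γ.valid (show seg spu.1 ∩ seg sqw.1 = ∅ from hdisj)) heq1
  · exact (γ.valid (show seg spw.1 ∩ seg squ.1 = ∅ from hdisj)) heq2

lemma key (P : Finset (ℝ × ℝ)) (hcard : P.card = 5) (hgp : GenPos ↑P)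
    (γ : (DisjGraph ↑P).Coloring (Fin 3)) (p q r : ℝ × ℝ)
    (hp : p ∈ P) (hq : q ∈ P) (hr : r ∈ P)
    (hpq : p ≠ q) (hpr : p ≠ r) (hqr : q ≠ r)
    (Hp : ∃ c, (∃ s, γ s = c) ∧ IsApex γ c p)
    (Hq : ∃ c, (∃ s, γ s = c) ∧ IsApex γ c q)
    (Hr : ∃ c, (∃ s, γ s = c) ∧ IsApex γ c r) : False := by
  obtain ⟨cp, hpne, hap⟩ := Hp
  obtain ⟨cq, hqne, haq⟩ := Hq
  obtain ⟨cr, hrne, har⟩ := Hr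
  -- find the two other points
  have hsub : ({p, q, r} : Finset (ℝ × ℝ)) ⊆ P := by
    intro z hz
    simp only [Finset.mem_insert, Finset.mem_singleton] at hz
    rcases hz with rfl | rfl | rfl <;> assumption
  have hcard3 : ({p, q, r} : Finset (ℝ × ℝ)).card = 3 := by
    rw [Finset.card_insert_of_notMem (by simp [hpq, hpr]),
      Finset.card_insert_of_notMem (by simp [hqr]), Finset.card_singleton]
  have hcard2 : (P \ {p, q, r}).card = 2 := by
    rw [Finset.card_sdiff_of_subset hsub, hcard, hcard3]
  obtain ⟨u, w, huw, hset⟩ := Finset.card_eq_two.mp hcard2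
  have hu : u ∈ P \ {p, q, r} := by rw [hset]; simp
  have hw : w ∈ P \ {p, q, r} := by rw [hset]; simp
  rw [Finset.mem_sdiff] at hu hw
  obtain ⟨huP, hu3⟩ := hu
  obtain ⟨hwP, hw3⟩ := hw
  simp only [Finset.mem_insert, Finset.mem_singleton, not_or] at hu3 hw3
  obtain ⟨hup, huq, hur⟩ := hu3
  obtain ⟨hwp, hwq, hwr⟩ := hw3
  have hp' : p ∈ (↑P : Set (ℝ × ℝ)) := hp
  have hq' : q ∈ (↑P : Set (ℝ × ℝ)) := hq
  have hu' : u ∈ (↑P : Set (ℝ × ℝ)) := huP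
  have hw' : w ∈ (↑P : Set (ℝ × ℝ)) := hwP
  by_cases hcpq : cp = cq
  · exact key2 P hgp γ p q r u w hp hq huP hwP hpq hpr (Ne.symm hup) (Ne.symm hwp)
      hqr (Ne.symm huq) (Ne.symm hwq) (Ne.symm hur) (Ne.symm hwr) huw
      cp cr hpne hap (hcpq ▸ haq) har
  by_cases hcpr : cp = cr
  · exact key2 P hgp γ p r q u w hp hr huP hwP hpr hpq (Ne.symm hup) (Ne.symm hwp)
      (Ne.symm hqr) (Ne.symm hur) (Ne.symm hwr) (Ne.symm huq) (Ne.symm hwq) huw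
      cp cq hpne hap (hcpr ▸ har) haq
  by_cases hcqr : cq = cr
  · exact key2 P hgp γ q r p u w hq hr huP hwP hqr hpq.symm (Ne.symm huq) (Ne.symm hwq)
      hpr.symm (Ne.symm hur) (Ne.symm hwr) (Ne.symm hup) (Ne.symm hwp) huw
      cq cp hqne haq (hcqr ▸ har) hap
  -- all colours distinct
  set s := mkSeg ↑P u w hu' hw' huw with hs
  rcases fin3_eq_of (γ s) cp cq cr hcpq hcpr hcqr with h | h | h
  · have := hap s h
    rw [mem_mkSeg] at this
    rcases this with h' | h'
    · exact hup h'.symm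
    · exact hwp h'.symm
  · have := haq s h
    rw [mem_mkSeg] at this
    rcases this with h' | h'
    · exact huq h'.symm
    · exact hwq h'.symm
  · have := har s h
    rw [mem_mkSeg] at this
    rcases this with h' | h'
    · exact hur h'.symm
    · exact hwr h'.symm

theorem stmt4 (P : Finset (ℝ × ℝ)) (hcard : P.card = 5) (hgp : GenPos ↑P)
    (hconv : ConvexPos ↑P) (γ : (DisjGraph ↑P).Coloring (Fin 3)) :
    Set.ncard {p : ℝ × ℝ | p ∈ P ∧
      ∃ c, (∃ s, γ s = c) ∧ IsStarClass γ c ∧ IsApex γ c p} ≤ 2 := by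
  by_contra h
  push_neg at h
  have hfin : {p : ℝ × ℝ | p ∈ P ∧
      ∃ c, (∃ s, γ s = c) ∧ IsStarClass γ c ∧ IsApex γ c p}.Finite :=
    Set.Finite.subset P.finite_toSet (fun x hx => hx.1)
  obtain ⟨p, hp, q, hq, r, hr, hpq, hpr, hqr⟩ := (Set.two_lt_ncard hfin).mp h
  obtain ⟨hpP, cp, hpne, -, hap⟩ := hp
  obtain ⟨hqP, cq, hqne, -, haq⟩ := hq
  obtain ⟨hrP, cr, hrne, -, har⟩ := hr
  exact key P hcard hgp γ p q r hpP hqP hrP hpq hpr hqr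
    ⟨cp, hpne, hap⟩ ⟨cq, hqne, haq⟩ ⟨cr, hrne, har⟩
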